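/- arXiv:1010.5864 — 4 statements merged into one kernel-verified Lean document; each statement's English description precedes it below -/
import Mathlib

section
/- There exists a universal constant C > 0 such that for all κ ≥ 2 and all v ∈ H¹(ℝ²), ∫_{|y| ≤ κ} |v(y)|² dy ≤ C κ² (log κ) ( ∫_{ℝ²} |∇v(y)|² dy + ∫_{|y| ≤ 1} |v(y)|² e^{−|y|} dy ). -/
open MeasureTheory Set Metric
open scoped ENNReal

/-!
Fix a direction `ω` and put `g r = v (r • ω)`. For `R ∈ (1/2, κ]` and `r ∈ (1/2, 1]`,
`g R - g r` is the integral of `g'` over a subinterval of `(1/2, κ]`, and Cauchy–Schwarz against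
the weight `s` (the Jacobian of polar coordinates in the plane) gives
`|g R|² ≤ 2 |g r|² + 2 log (2κ) ∫_{1/2}^κ s |g' s|² ds`; the logarithm is `∫_{1/2}^κ ds / s`.
Averaging over `r`, multiplying by `R ≤ κ`, integrating over `R ∈ (1/2, κ]` and then over the
directions `ω` yields
`∫_{1/2 < |y| ≤ κ} |v|² ≤ κ² (8 ∫_{1/2 < |y| ≤ 1} |v|² + 2 log (2κ) ∫ |∇v|²)`.
On the unit ball `1 ≤ e · e^{-|y|}`, which accounts for the remaining region and the weight.
-/

theorem ENNReal.add_sq_le_two_mul (x y : ℝ≥0∞) : (x + y) ^ 2 ≤ 2 * (x ^ 2 + y ^ 2) := by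
  rcases eq_or_ne x ⊤ with rfl | hx
  · simp
  rcases eq_or_ne y ⊤ with rfl | hy
  · simp
  lift x to NNReal using hx
  lift y to NNReal using hy
  exact_mod_cast (add_sq_le : (x + y) ^ 2 ≤ 2 * (x ^ 2 + y ^ 2))

theorem ENNReal.sq_lintegral_mul_le {α : Type*} [MeasurableSpace α] {μ : Measure α}
    {f g : α → ℝ≥0∞} (hf : AEMeasurable f μ) (hg : AEMeasurable g μ) :
    (∫⁻ a, f a * g a ∂μ) ^ 2 ≤ (∫⁻ a, f a ^ 2 ∂μ) * ∫⁻ a, g a ^ 2 ∂μ := by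
  have h := ENNReal.lintegral_mul_le_Lp_mul_Lq μ Real.HolderConjugate.two_two hf hg
  simp only [Pi.mul_apply, ENNReal.rpow_two] at h
  calc (∫⁻ a, f a * g a ∂μ) ^ 2
      ≤ ((∫⁻ a, f a ^ 2 ∂μ) ^ (1 / 2 : ℝ) * (∫⁻ a, g a ^ 2 ∂μ) ^ (1 / 2 : ℝ)) ^ 2 := by gcongr
    _ = (∫⁻ a, f a ^ 2 ∂μ) * ∫⁻ a, g a ^ 2 ∂μ := by
      rw [mul_pow, ← ENNReal.rpow_natCast, ← ENNReal.rpow_natCast, ← ENNReal.rpow_mul,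
        ← ENNReal.rpow_mul]
      norm_num

theorem sq_setLIntegral_Ioc_le_log_mul {a b : ℝ} (ha : 0 < a) (hab : a ≤ b) {G : ℝ → ℝ≥0∞}
    (hG : AEMeasurable G) :
    (∫⁻ s in Ioc a b, G s) ^ 2 ≤
      ENNReal.ofReal (Real.log (b / a)) * ∫⁻ s in Ioc a b, ENNReal.ofReal s * G s ^ 2 := by
  have hpos : ∀ s ∈ Ioc a b, 0 < s := fun s hs => ha.trans hs.1
  -- Cauchy–Schwarz for `G = s^{-1/2} · (s^{1/2} G)`
  have hsplit : ∫⁻ s in Ioc a b, G s =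
      ∫⁻ s in Ioc a b, ENNReal.ofReal (√s)⁻¹ * (ENNReal.ofReal √s * G s) := by
    refine setLIntegral_congr_fun measurableSet_Ioc fun s hs => ?_
    rw [← mul_assoc, ← ENNReal.ofReal_mul (by positivity),
      inv_mul_cancel₀ (Real.sqrt_pos.2 (hpos s hs)).ne', ENNReal.ofReal_one, one_mul]
  have hinv : ∫⁻ s in Ioc a b, ENNReal.ofReal (√s)⁻¹ ^ 2 = ENNReal.ofReal (Real.log (b / a)) := by
    have hint : IntegrableOn (fun s : ℝ => s⁻¹) (Ioc a b) :=
      (ContinuousOn.integrableOn_Icc (continuousOn_inv₀.mono fun s hs =>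
        (ha.trans_le hs.1).ne')).mono_set Ioc_subset_Icc_self
    rw [← integral_inv_of_pos ha (ha.trans_le hab), intervalIntegral.integral_of_le hab,
      ofReal_integral_eq_lintegral_ofReal hint]
    · refine setLIntegral_congr_fun measurableSet_Ioc fun s hs => ?_
      rw [← ENNReal.ofReal_pow (by positivity), inv_pow, Real.sq_sqrt (hpos s hs).le]
    · filter_upwards [ae_restrict_mem measurableSet_Ioc] with s hs
      exact inv_nonneg.2 (hpos s hs).le
  have hsq : ∀ s ∈ Ioc a b, (ENNReal.ofReal √s * G s) ^ 2 = ENNReal.ofReal s * G s ^ 2 := by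
    intro s hs
    rw [mul_pow, ← ENNReal.ofReal_pow (Real.sqrt_nonneg s), Real.sq_sqrt (hpos s hs).le]
  rw [hsplit, ← hinv, ← setLIntegral_congr_fun measurableSet_Ioc hsq]
  exact ENNReal.sq_lintegral_mul_le (by fun_prop) (by fun_prop)

theorem enorm_sub_le_lintegral_deriv_of_differentiableAt {F : Type*} [NormedAddCommGroup F]
    [NormedSpace ℝ F] [CompleteSpace F] {g : ℝ → F} {a b : ℝ}
    (hg : ∀ t ∈ uIcc a b, DifferentiableAt ℝ g t) :
    ‖g b - g a‖ₑ ≤ ∫⁻ t in uIoc a b, ‖deriv g t‖ₑ := by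
  by_cases hfin : ∫⁻ t in uIoc a b, ‖deriv g t‖ₑ = ∞
  · exact hfin ▸ le_top
  have hint : IntervalIntegrable (deriv g) volume a b :=
    intervalIntegrable_iff.2 ⟨aestronglyMeasurable_deriv g _, lt_top_iff_ne_top.2 hfin⟩
  rw [← intervalIntegral.integral_deriv_eq_sub hg hint, ← ofReal_norm,
    intervalIntegral.norm_integral_eq_norm_integral_uIoc, ofReal_norm]
  exact enorm_integral_le_lintegral_enorm _

theorem enorm_deriv_comp_smul_le {E F : Type*} [NormedAddCommGroup E] [NormedSpace ℝ E]
    [NormedAddCommGroup F] [NormedSpace ℝ F] {v : E → F} {x : E} {s : ℝ}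
    (hv : DifferentiableAt ℝ v (s • x)) :
    ‖deriv (fun r : ℝ => v (r • x)) s‖ₑ ≤ ‖fderiv ℝ v (s • x)‖ₑ * ‖x‖ₑ := by
  have hray : HasDerivAt (fun r : ℝ => r • x) x s := by
    simpa using (hasDerivAt_id s).smul_const x
  change ‖deriv (v ∘ fun r : ℝ => r • x) s‖ₑ ≤ _
  rw [(hv.hasFDerivAt.comp_hasDerivAt s hray).deriv]
  exact (fderiv ℝ v (s • x)).le_opENorm x

section Polar

variable {E : Type*} [NormedAddCommGroup E] [NormedSpace ℝ E] [FiniteDimensional ℝ E]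
  [MeasurableSpace E] [BorelSpace E] [Nontrivial E] (μ : Measure E) [μ.IsAddHaarMeasure]

theorem lintegral_eq_lintegral_toSphere_lintegral_Ioi {f : E → ℝ≥0∞} (hf : Measurable f) :
    ∫⁻ x, f x ∂μ = ∫⁻ ω, (∫⁻ r in Ioi (0 : ℝ),
      ENNReal.ofReal (r ^ (Module.finrank ℝ E - 1)) * f (r • (ω : E))) ∂μ.toSphere := by
  have hmeas : Measurable fun p : sphere (0 : E) 1 × Ioi (0 : ℝ) => f ((p.2 : ℝ) • (p.1 : E)) :=
    hf.comp (by fun_prop)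
  calc ∫⁻ x, f x ∂μ = ∫⁻ x : ({0}ᶜ : Set E), f x ∂μ.comap (↑) := by
        rw [lintegral_subtype_comap (measurableSet_singleton _).compl, restrict_compl_singleton]
    _ = ∫⁻ p, f ((p.2 : ℝ) • (p.1 : E))
          ∂μ.toSphere.prod (.volumeIoiPow (Module.finrank ℝ E - 1)) := by
        rw [← μ.measurePreserving_homeomorphUnitSphereProd.lintegral_comp_emb
          (Homeomorph.measurableEmbedding _)]
        refine lintegral_congr fun x => ?_
        simp [smul_inv_smul₀ (norm_ne_zero_iff.2 x.2)]
    _ = ∫⁻ ω, (∫⁻ r, f ((r : ℝ) • (ω : E))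
          ∂.volumeIoiPow (Module.finrank ℝ E - 1)) ∂μ.toSphere :=
        lintegral_prod _ hmeas.aemeasurable
    _ = _ := by
        refine lintegral_congr fun ω => ?_
        rw [Measure.volumeIoiPow, lintegral_withDensity_eq_lintegral_mul _ (by fun_prop)
          (show Measurable fun r : Ioi (0 : ℝ) => f ((r : ℝ) • (ω : E)) from
            hf.comp (by fun_prop)),
          ← lintegral_subtype_comap measurableSet_Ioi]
        rfl

theorem setLIntegral_norm_mem_Ioc_eq {f : E → ℝ≥0∞} (hf : Measurable f) {a b : ℝ} (ha : 0 ≤ a) :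
    ∫⁻ x in {x : E | ‖x‖ ∈ Ioc a b}, f x ∂μ = ∫⁻ ω, (∫⁻ r in Ioc a b,
      ENNReal.ofReal (r ^ (Module.finrank ℝ E - 1)) * f (r • (ω : E))) ∂μ.toSphere := by
  have hS : MeasurableSet {x : E | ‖x‖ ∈ Ioc a b} := measurableSet_Ioc.preimage measurable_norm
  rw [← lintegral_indicator hS, lintegral_eq_lintegral_toSphere_lintegral_Ioi μ (hf.indicator hS)]
  refine lintegral_congr fun ω => ?_
  have hnorm : ∀ r ∈ Ioi (0 : ℝ), ‖r • (ω : E)‖ = r := fun r hr => by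
    rw [norm_smul, norm_eq_of_mem_sphere, mul_one, Real.norm_of_nonneg (le_of_lt hr)]
  calc _ = ∫⁻ r in Ioi (0 : ℝ), (Ioc a b).indicator
          (fun r => ENNReal.ofReal (r ^ (Module.finrank ℝ E - 1)) * f (r • (ω : E))) r :=
        setLIntegral_congr_fun measurableSet_Ioi fun r hr => by
          by_cases hrab : r ∈ Ioc a b <;> simp only [indicator, mem_ofPred_eq, hnorm r hr, hrab,
            if_true, if_false, mul_zero]
    _ = _ := by
        rw [setLIntegral_indicator measurableSet_Ioc,
          inter_eq_left.2 (Ioc_subset_Ioi_self.trans (Ioi_subset_Ioi ha))]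

end Polar

section Ray

variable {F : Type*} [NormedAddCommGroup F] [NormedSpace ℝ F] [CompleteSpace F]

theorem enorm_sq_le_of_mem_Ioc {g : ℝ → F} {a c R r : ℝ} (ha : 0 < a)
    (hg : ∀ t ∈ Icc a c, DifferentiableAt ℝ g t) (hR : R ∈ Ioc a c) (hr : r ∈ Ioc a c) :
    ‖g R‖ₑ ^ 2 ≤ 2 * (‖g r‖ₑ ^ 2 + ENNReal.ofReal (Real.log (c / a)) *
      ∫⁻ s in Ioc a c, ENNReal.ofReal s * ‖deriv g s‖ₑ ^ 2) := by
  have hIcc : uIcc r R ⊆ Icc a c :=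
    uIcc_subset_Icc (Ioc_subset_Icc_self hr) (Ioc_subset_Icc_self hR)
  have hIoc : uIoc r R ⊆ Ioc a c := Ioc_subset_Ioc (le_min hr.1.le hR.1.le) (max_le hr.2 hR.2)
  have hdiff : ‖g R - g r‖ₑ ≤ ∫⁻ s in Ioc a c, ‖deriv g s‖ₑ :=
    (enorm_sub_le_lintegral_deriv_of_differentiableAt fun t ht => hg t (hIcc ht)).trans
      (lintegral_mono_set hIoc)
  calc ‖g R‖ₑ ^ 2 ≤ (‖g r‖ₑ + ‖g R - g r‖ₑ) ^ 2 := by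
        gcongr
        simpa using enorm_add_le (g r) (g R - g r)
    _ ≤ 2 * (‖g r‖ₑ ^ 2 + ‖g R - g r‖ₑ ^ 2) := ENNReal.add_sq_le_two_mul _ _
    _ ≤ 2 * (‖g r‖ₑ ^ 2 + (∫⁻ s in Ioc a c, ‖deriv g s‖ₑ) ^ 2) := by gcongr
    _ ≤ _ := by
        gcongr
        exact sq_setLIntegral_Ioc_le_log_mul ha (hR.1.le.trans hR.2)
          (aestronglyMeasurable_deriv g _).enorm

theorem enorm_sq_le_lintegral_Ioc_half {g : ℝ → F} {κ R : ℝ} (hκ : 1 ≤ κ)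
    (hg : ∀ t ∈ Icc 2⁻¹ κ, DifferentiableAt ℝ g t) (hR : R ∈ Ioc 2⁻¹ κ) :
    ‖g R‖ₑ ^ 2 ≤ 8 * (∫⁻ r in Ioc 2⁻¹ 1, ENNReal.ofReal r * ‖g r‖ₑ ^ 2) +
      2 * (ENNReal.ofReal (Real.log (2 * κ)) *
        ∫⁻ s in Ioc 2⁻¹ κ, ENNReal.ofReal s * ‖deriv g s‖ₑ ^ 2) := by
  set LA := ENNReal.ofReal (Real.log (2 * κ)) *
    ∫⁻ s in Ioc 2⁻¹ κ, ENNReal.ofReal s * ‖deriv g s‖ₑ ^ 2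
  -- average over `r ∈ (1/2, 1]`, an interval of length `1/2` on which `1 ≤ 2 r`
  have hr : ∀ r ∈ Ioc (2⁻¹ : ℝ) 1,
      ‖g R‖ₑ ^ 2 ≤ 4 * (ENNReal.ofReal r * ‖g r‖ₑ ^ 2) + 2 * LA := by
    intro r hr
    have h2r : (2 : ℝ≥0∞) ≤ 4 * ENNReal.ofReal r := by
      rw [← ENNReal.ofReal_ofNat 2, ← ENNReal.ofReal_ofNat 4, ← ENNReal.ofReal_mul (by norm_num)]
      exact ENNReal.ofReal_le_ofReal (by linarith [hr.1])
    have hray := enorm_sq_le_of_mem_Ioc (by norm_num) hg hR ⟨hr.1, hr.2.trans hκ⟩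
    rw [show κ / 2⁻¹ = 2 * κ by ring, mul_add] at hray
    calc ‖g R‖ₑ ^ 2 ≤ 2 * ‖g r‖ₑ ^ 2 + 2 * LA := hray
      _ ≤ 4 * ENNReal.ofReal r * ‖g r‖ₑ ^ 2 + 2 * LA := by gcongr
      _ = _ := by rw [mul_assoc]
  have hint := lintegral_mono_ae (μ := volume.restrict (Ioc (2⁻¹ : ℝ) 1))
    ((ae_restrict_mem measurableSet_Ioc).mono hr)
  rw [lintegral_add_right _ measurable_const, lintegral_const_mul' _ _ (by simp),
    setLIntegral_const, setLIntegral_const, Real.volume_Ioc] at hint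
  have hhalf : ENNReal.ofReal (1 - 2⁻¹) * 2 = 1 := by
    rw [show (1 : ℝ) - 2⁻¹ = 2⁻¹ by norm_num, ENNReal.ofReal_inv_of_pos two_pos,
      ENNReal.ofReal_ofNat, ENNReal.inv_mul_cancel two_ne_zero ENNReal.ofNat_ne_top]
  calc ‖g R‖ₑ ^ 2 = ‖g R‖ₑ ^ 2 * ENNReal.ofReal (1 - 2⁻¹) * 2 := by
        rw [mul_assoc, hhalf, mul_one]
    _ ≤ (4 * (∫⁻ r in Ioc 2⁻¹ 1, ENNReal.ofReal r * ‖g r‖ₑ ^ 2) +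
          2 * LA * ENNReal.ofReal (1 - 2⁻¹)) * 2 := by gcongr
    _ = _ := by
        rw [add_mul, mul_assoc (2 * LA), hhalf, mul_one, mul_comm _ 2, ← mul_assoc]; norm_num

theorem setLIntegral_Ioc_mul_enorm_sq_le {g : ℝ → F} {κ : ℝ} (hκ : 1 ≤ κ)
    (hg : ∀ t ∈ Icc 2⁻¹ κ, DifferentiableAt ℝ g t) :
    ∫⁻ R in Ioc 2⁻¹ κ, ENNReal.ofReal R * ‖g R‖ₑ ^ 2 ≤ ENNReal.ofReal (κ ^ 2) *
      (8 * (∫⁻ r in Ioc 2⁻¹ 1, ENNReal.ofReal r * ‖g r‖ₑ ^ 2) +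
        2 * (ENNReal.ofReal (Real.log (2 * κ)) *
          ∫⁻ s in Ioc 2⁻¹ κ, ENNReal.ofReal s * ‖deriv g s‖ₑ ^ 2)) := by
  calc ∫⁻ R in Ioc 2⁻¹ κ, ENNReal.ofReal R * ‖g R‖ₑ ^ 2
      ≤ ∫⁻ R in Ioc 2⁻¹ κ, ENNReal.ofReal κ *
          (8 * (∫⁻ r in Ioc 2⁻¹ 1, ENNReal.ofReal r * ‖g r‖ₑ ^ 2) +
            2 * (ENNReal.ofReal (Real.log (2 * κ)) *
              ∫⁻ s in Ioc 2⁻¹ κ, ENNReal.ofReal s * ‖deriv g s‖ₑ ^ 2)) :=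
        setLIntegral_mono_ae' measurableSet_Ioc (.of_forall fun R hR =>
          mul_le_mul' (ENNReal.ofReal_le_ofReal hR.2) (enorm_sq_le_lintegral_Ioc_half hκ hg hR))
    _ ≤ _ := by
        rw [setLIntegral_const, Real.volume_Ioc, mul_right_comm,
          ← ENNReal.ofReal_mul (by linarith), sq]
        exact mul_le_mul_left (ENNReal.ofReal_le_ofReal (by nlinarith)) _

theorem setLIntegral_Ioc_mul_enorm_sq_comp_smul_le {E : Type*} [NormedAddCommGroup E]
    [NormedSpace ℝ E] {v : E → F} (hv : Differentiable ℝ v) {ω : E} (hω : ‖ω‖ = 1) {κ : ℝ}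
    (hκ : 1 ≤ κ) :
    ∫⁻ R in Ioc 2⁻¹ κ, ENNReal.ofReal R * ‖v (R • ω)‖ₑ ^ 2 ≤ ENNReal.ofReal (κ ^ 2) *
      (8 * (∫⁻ r in Ioc 2⁻¹ 1, ENNReal.ofReal r * ‖v (r • ω)‖ₑ ^ 2) +
        2 * (ENNReal.ofReal (Real.log (2 * κ)) *
          ∫⁻ s in Ioi 0, ENNReal.ofReal s * ‖fderiv ℝ v (s • ω)‖ₑ ^ 2)) := by
  refine (setLIntegral_Ioc_mul_enorm_sq_le hκ fun t _ => (hv _).comp t (by fun_prop)).trans ?_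
  gcongr ENNReal.ofReal (κ ^ 2) * (_ + 2 * (_ * ?_))
  calc ∫⁻ s in Ioc 2⁻¹ κ, ENNReal.ofReal s * ‖deriv (fun r : ℝ => v (r • ω)) s‖ₑ ^ 2
      ≤ ∫⁻ s in Ioc 2⁻¹ κ, ENNReal.ofReal s * ‖fderiv ℝ v (s • ω)‖ₑ ^ 2 := by
        refine lintegral_mono fun s => ?_
        have h := enorm_deriv_comp_smul_le (hv (s • ω))
        rw [← ofReal_norm ω, hω, ENNReal.ofReal_one, mul_one] at h
        gcongr
    _ ≤ _ := lintegral_mono_set (Ioc_subset_Ioi_self.trans (Ioi_subset_Ioi (by norm_num)))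

end Ray

theorem setLIntegral_norm_le_one_le_exp_one_mul {E : Type*} [NormedAddCommGroup E]
    [MeasurableSpace E] [OpensMeasurableSpace E] (μ : Measure E) (f : E → ℝ≥0∞) :
    ∫⁻ y in {y : E | ‖y‖ ≤ 1}, f y ∂μ ≤ ENNReal.ofReal (Real.exp 1) *
      ∫⁻ y in {y : E | ‖y‖ ≤ 1}, f y * ENNReal.ofReal (Real.exp (-‖y‖)) ∂μ := by
  rw [← lintegral_const_mul' _ _ ENNReal.ofReal_ne_top]
  refine setLIntegral_mono_ae' (measurableSet_le measurable_norm measurable_const)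
    (.of_forall fun y (hy : ‖y‖ ≤ 1) => ?_)
  rw [mul_left_comm, ← ENNReal.ofReal_mul (Real.exp_pos 1).le, ← Real.exp_add]
  exact le_mul_of_one_le_right' (ENNReal.one_le_ofReal.2 (Real.one_le_exp (by linarith)))

theorem setLIntegral_norm_le_enorm_sq_lt_top {E F : Type*} [NormedAddCommGroup E] [ProperSpace E]
    [MeasurableSpace E] [OpensMeasurableSpace E] (μ : Measure E) [IsFiniteMeasureOnCompacts μ]
    [NormedAddCommGroup F] {v : E → F} (hv : Continuous v) (r : ℝ) :
    ∫⁻ y in {y : E | ‖y‖ ≤ r}, ‖v y‖ₑ ^ 2 ∂μ < ∞ := by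
  have h := setLIntegral_lt_top_of_isCompact (μ := μ) measure_closedBall_lt_top.ne
    (isCompact_closedBall (0 : E) r) (hv.nnnorm.pow 2)
  rw [show closedBall (0 : E) r = {y : E | ‖y‖ ≤ r} by ext; simp] at h
  simpa [enorm_eq_nnnorm] using h

section Plane

variable {E F : Type*} [NormedAddCommGroup E] [NormedSpace ℝ E] [FiniteDimensional ℝ E]
  [MeasurableSpace E] [BorelSpace E] (μ : Measure E) [μ.IsAddHaarMeasure]
  [NormedAddCommGroup F] [NormedSpace ℝ F] [CompleteSpace F]

theorem setLIntegral_norm_mem_Ioc_enorm_sq_le (hE : Module.finrank ℝ E = 2) {v : E → F}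
    (hv : Differentiable ℝ v) {κ : ℝ} (hκ : 1 ≤ κ) :
    ∫⁻ y in {y : E | ‖y‖ ∈ Ioc 2⁻¹ κ}, ‖v y‖ₑ ^ 2 ∂μ ≤ ENNReal.ofReal (κ ^ 2) *
      (8 * (∫⁻ y in {y : E | ‖y‖ ∈ Ioc 2⁻¹ 1}, ‖v y‖ₑ ^ 2 ∂μ) +
        2 * (ENNReal.ofReal (Real.log (2 * κ)) * ∫⁻ y, ‖fderiv ℝ v y‖ₑ ^ 2 ∂μ)) := by
  have : Nontrivial E := Module.nontrivial_of_finrank_pos (R := ℝ) (by omega)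
  have hd : Module.finrank ℝ E - 1 = 1 := by omega
  have hvm : Measurable fun y => ‖v y‖ₑ ^ 2 := hv.continuous.enorm.measurable.pow_const 2
  have hdm : Measurable fun y => ‖fderiv ℝ v y‖ₑ ^ 2 :=
    (measurable_fderiv ℝ v).enorm.pow_const 2
  have hray : Measurable fun p : sphere (0 : E) 1 × ℝ => p.2 • (p.1 : E) := by fun_prop
  rw [setLIntegral_norm_mem_Ioc_eq μ hvm (by norm_num),
    setLIntegral_norm_mem_Ioc_eq μ hvm (by norm_num),
    lintegral_eq_lintegral_toSphere_lintegral_Ioi μ hdm, hd]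
  simp only [pow_one]
  calc ∫⁻ ω, (∫⁻ R in Ioc 2⁻¹ κ, ENNReal.ofReal R * ‖v (R • (ω : E))‖ₑ ^ 2) ∂μ.toSphere
      ≤ ∫⁻ ω, ENNReal.ofReal (κ ^ 2) *
          (8 * (∫⁻ r in Ioc 2⁻¹ 1, ENNReal.ofReal r * ‖v (r • (ω : E))‖ₑ ^ 2) +
            2 * (ENNReal.ofReal (Real.log (2 * κ)) *
              ∫⁻ s in Ioi 0, ENNReal.ofReal s * ‖fderiv ℝ v (s • (ω : E))‖ₑ ^ 2)) ∂μ.toSphere :=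
        lintegral_mono fun ω =>
          setLIntegral_Ioc_mul_enorm_sq_comp_smul_le hv (norm_eq_of_mem_sphere ω) hκ
    _ = _ := by
        have hB : Measurable fun ω : sphere (0 : E) 1 =>
            ∫⁻ r in Ioc 2⁻¹ 1, ENNReal.ofReal r * ‖v (r • (ω : E))‖ₑ ^ 2 :=
          Measurable.lintegral_prod_right'
            (f := fun p : sphere (0 : E) 1 × ℝ => ENNReal.ofReal p.2 * ‖v (p.2 • (p.1 : E))‖ₑ ^ 2)
            ((ENNReal.measurable_ofReal.comp measurable_snd).mul (hvm.comp hray))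
        rw [lintegral_const_mul' _ _ ENNReal.ofReal_ne_top, lintegral_add_left (hB.const_mul 8),
          lintegral_const_mul' _ _ (by simp), lintegral_const_mul' _ _ (by simp),
          lintegral_const_mul' _ _ ENNReal.ofReal_ne_top]

theorem setLIntegral_norm_le_enorm_sq_le (hE : Module.finrank ℝ E = 2) {v : E → F}
    (hv : Differentiable ℝ v) {κ : ℝ} (hκ : 2 ≤ κ) :
    ∫⁻ y in {y : E | ‖y‖ ≤ κ}, ‖v y‖ₑ ^ 2 ∂μ ≤ ENNReal.ofReal (40 * κ ^ 2 * Real.log κ) *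
      ((∫⁻ y, ‖fderiv ℝ v y‖ₑ ^ 2 ∂μ) +
        ∫⁻ y in {y : E | ‖y‖ ≤ 1}, ‖v y‖ₑ ^ 2 * ENNReal.ofReal (Real.exp (-‖y‖)) ∂μ) := by
  set D := ∫⁻ y, ‖fderiv ℝ v y‖ₑ ^ 2 ∂μ
  set W := ∫⁻ y in {y : E | ‖y‖ ≤ 1}, ‖v y‖ₑ ^ 2 * ENNReal.ofReal (Real.exp (-‖y‖)) ∂μ
  have hunit := setLIntegral_norm_le_one_le_exp_one_mul μ fun y => ‖v y‖ₑ ^ 2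
  have hcover : {y : E | ‖y‖ ≤ κ} ⊆ {y : E | ‖y‖ ≤ 1} ∪ {y : E | ‖y‖ ∈ Ioc 2⁻¹ κ} :=
    fun y hy => by
      by_cases h : ‖y‖ ≤ 1
      · exact Or.inl h
      · exact Or.inr ⟨by simp only [not_le] at h; linarith, hy⟩
  have hann := setLIntegral_norm_mem_Ioc_enorm_sq_le μ hE hv (by linarith : 1 ≤ κ) (v := v)
  have hinner : ∫⁻ y in {y : E | ‖y‖ ∈ Ioc 2⁻¹ 1}, ‖v y‖ₑ ^ 2 ∂μ ≤
      ENNReal.ofReal (Real.exp 1) * W :=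
    (lintegral_mono_set fun y hy => hy.2).trans hunit
  have hlog : Real.log 2 ≤ Real.log κ := Real.log_le_log two_pos hκ
  have hlog2 := Real.log_two_gt_d9
  have hexp := Real.exp_one_lt_d9
  calc ∫⁻ y in {y : E | ‖y‖ ≤ κ}, ‖v y‖ₑ ^ 2 ∂μ
      ≤ ENNReal.ofReal (Real.exp 1) * W + ENNReal.ofReal (κ ^ 2) *
          (8 * (ENNReal.ofReal (Real.exp 1) * W) +
            2 * (ENNReal.ofReal (Real.log (2 * κ)) * D)) := by
        refine (lintegral_mono_set hcover).trans ((lintegral_union_le _ _ _).trans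
          (add_le_add hunit (hann.trans ?_)))
        gcongr
    _ = ENNReal.ofReal (Real.exp 1 * (1 + 8 * κ ^ 2)) * W +
          ENNReal.ofReal (2 * κ ^ 2 * Real.log (2 * κ)) * D := by
        rw [ENNReal.ofReal_mul (by positivity), ENNReal.ofReal_add zero_le_one (by positivity),
          ENNReal.ofReal_mul (by norm_num), ENNReal.ofReal_mul (by positivity),
          ENNReal.ofReal_mul (by norm_num)]
        simp only [ENNReal.ofReal_one, ENNReal.ofReal_ofNat]
        ring
    _ ≤ ENNReal.ofReal (40 * κ ^ 2 * Real.log κ) * W +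
          ENNReal.ofReal (40 * κ ^ 2 * Real.log κ) * D := by
        have hκ2 : 4 ≤ κ ^ 2 := by nlinarith
        gcongr ENNReal.ofReal ?_ * W + ENNReal.ofReal ?_ * D
        · nlinarith [mul_le_mul_of_nonneg_right hexp.le (by positivity : (0 : ℝ) ≤ 1 + 8 * κ ^ 2),
            mul_le_mul_of_nonneg_left hlog (by positivity : (0 : ℝ) ≤ κ ^ 2)]
        · rw [Real.log_mul two_ne_zero (by linarith)]
          nlinarith [mul_le_mul_of_nonneg_left hlog (by positivity : (0 : ℝ) ≤ κ ^ 2)]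
    _ = _ := by ring

theorem setIntegral_norm_le_norm_sq_le (hE : Module.finrank ℝ E = 2) {v : E → F}
    (hv : Differentiable ℝ v) (hdv : MemLp (fderiv ℝ v) 2 μ) {κ : ℝ} (hκ : 2 ≤ κ) :
    ∫ y in {y : E | ‖y‖ ≤ κ}, ‖v y‖ ^ 2 ∂μ ≤ 40 * κ ^ 2 * Real.log κ *
      ((∫ y, ‖fderiv ℝ v y‖ ^ 2 ∂μ) +
        ∫ y in {y : E | ‖y‖ ≤ 1}, ‖v y‖ ^ 2 * Real.exp (-‖y‖) ∂μ) := by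
  have hvm : Measurable fun y => ‖v y‖ₑ ^ 2 := hv.continuous.enorm.measurable.pow_const 2
  have hdm : Measurable fun y => ‖fderiv ℝ v y‖ₑ ^ 2 :=
    (measurable_fderiv ℝ v).enorm.pow_const 2
  have hwm : Measurable fun y : E => ENNReal.ofReal (Real.exp (-‖y‖)) := by fun_prop
  have hD : ∫⁻ y, ‖fderiv ℝ v y‖ₑ ^ 2 ∂μ ≠ ∞ := by
    simpa using (lintegral_rpow_enorm_lt_top_of_eLpNorm_lt_top two_ne_zero
      ENNReal.ofNat_ne_top hdv.eLpNorm_lt_top).ne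
  have hW : ∫⁻ y in {y : E | ‖y‖ ≤ 1},
      ‖v y‖ₑ ^ 2 * ENNReal.ofReal (Real.exp (-‖y‖)) ∂μ ≠ ∞ := by
    refine ne_top_of_le_ne_top (setLIntegral_norm_le_enorm_sq_lt_top μ hv.continuous 1).ne
      (lintegral_mono fun y => mul_le_of_le_one_right' ?_)
    exact ENNReal.ofReal_le_one.2 (Real.exp_le_one_iff.2 (by simp))
  have hL : ∫ y in {y : E | ‖y‖ ≤ κ}, ‖v y‖ ^ 2 ∂μ =
      (∫⁻ y in {y : E | ‖y‖ ≤ κ}, ‖v y‖ₑ ^ 2 ∂μ).toReal := by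
    rw [← integral_toReal hvm.aemeasurable (.of_forall fun _ => by finiteness)]
    simp
  have hR : (∫ y, ‖fderiv ℝ v y‖ ^ 2 ∂μ) +
      ∫ y in {y : E | ‖y‖ ≤ 1}, ‖v y‖ ^ 2 * Real.exp (-‖y‖) ∂μ =
      ((∫⁻ y, ‖fderiv ℝ v y‖ₑ ^ 2 ∂μ) +
        ∫⁻ y in {y : E | ‖y‖ ≤ 1}, ‖v y‖ₑ ^ 2 * ENNReal.ofReal (Real.exp (-‖y‖)) ∂μ).toReal := by
    rw [ENNReal.toReal_add hD hW, ← integral_toReal hdm.aemeasurable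
      (.of_forall fun _ => by finiteness), ← integral_toReal
      (f := fun y => ‖v y‖ₑ ^ 2 * ENNReal.ofReal (Real.exp (-‖y‖))) (hvm.mul hwm).aemeasurable
      (.of_forall fun _ => by finiteness)]
    simp [Real.exp_nonneg]
  rw [hL, hR, ← ENNReal.toReal_ofReal (mul_nonneg (by positivity) (Real.log_nonneg (by linarith)) :
    0 ≤ 40 * κ ^ 2 * Real.log κ), ← ENNReal.toReal_mul]
  exact ENNReal.toReal_mono
    (ENNReal.mul_ne_top ENNReal.ofReal_ne_top (ENNReal.add_ne_top.2 ⟨hD, hW⟩))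
    (setLIntegral_norm_le_enorm_sq_le μ hE hv hκ)

end Plane

/-- There exists a universal constant C > 0 such that for all κ ≥ 2 and
all v ∈ H¹(ℝ²), ∫_{|y|≤κ} |v|² ≤ C κ² (log κ) ( ∫ |∇v|² + ∫_{|y|≤1} |v|² e^{−|y|} ). -/
theorem stmt_1 :
    ∃ C : ℝ, 0 < C ∧
      ∀ κ : ℝ, 2 ≤ κ →
      ∀ v : EuclideanSpace ℝ (Fin 2) → ℂ,
        Differentiable ℝ v →
        MemLp v 2 (volume : Measure (EuclideanSpace ℝ (Fin 2))) →
        MemLp (fun y => fderiv ℝ v y) 2 (volume : Measure (EuclideanSpace ℝ (Fin 2))) →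
        ∫ y in {y : EuclideanSpace ℝ (Fin 2) | ‖y‖ ≤ κ}, ‖v y‖ ^ 2 ≤
          C * κ ^ 2 * Real.log κ *
            ((∫ y : EuclideanSpace ℝ (Fin 2), ‖fderiv ℝ v y‖ ^ 2) +
              ∫ y in {y : EuclideanSpace ℝ (Fin 2) | ‖y‖ ≤ 1},
                ‖v y‖ ^ 2 * Real.exp (-‖y‖)) :=
  ⟨40, by norm_num, fun _ hκ _ hv _ hdv =>
    setIntegral_norm_le_norm_sq_le volume finrank_euclideanSpace_fin hv hdv hκ⟩
end

section
/- Quadratic phase removal for self-similar profiles: Let m ∈ ℤ, b ∈ ℝ, and let P : (0,∞) → ℝ be twice continuously differentiable. Define Q_b : ℝ² ∖ {0} → ℂ in polar coordinates by Q_b(r cos θ, r sin θ) = e^{imθ} P(r) e^{−i b r²/4}. Then Q_b satisfies Δ Q_b − Q_b + i b Λ Q_b + Q_b |Q_b|² = 0 pointwise on ℝ² ∖ {0} if and only if P satisfies P''(r) + (1/r) P'(r) − (1 + m²/r² − b²r²/4) P(r) + P(r)³ = 0 for all r > 0. -/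
/-!
Off the origin write `e^{imθ} f(r) = z^m · r^{-m} f(r)`. Since `z ↦ z^m` is holomorphic, hence
harmonic, and `∇(z^m) · ∇g(|z|) = m z^m g'(r)/r`, the Laplacian of `z^m g(|z|)` is
`z^m (g'' + (2m+1) g'/r)`; with `g = r^{-m} f` this is the spin-`m` radial Laplacian
`e^{imθ} (f'' + f'/r - m² f/r²)`, and likewise `Λ` acts as `e^{imθ} (f + r f')`.
For `f = P e^{-ibr²/4}` the terms `± i b r P'` and `± i b P` cancel, and the phase contributes
`-b²r²/4 · P` through `f''` and `+b²r²/2 · P` through `ibΛ`, leaving `e^{imθ} e^{-ibr²/4}`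
times the profile equation.
-/

/-- Partial derivative in the real direction of a function on ℂ ≅ ℝ². -/
noncomputable def cd1 (f : ℂ → ℂ) (z : ℂ) : ℂ := deriv (fun t : ℝ => f (z + (t : ℂ))) 0

/-- Partial derivative in the imaginary direction of a function on ℂ ≅ ℝ². -/
noncomputable def cd2 (f : ℂ → ℂ) (z : ℂ) : ℂ :=
  deriv (fun t : ℝ => f (z + (t : ℂ) * Complex.I)) 0

/-- Laplacian of a function on ℂ ≅ ℝ². -/
noncomputable def clap (f : ℂ → ℂ) (z : ℂ) : ℂ := cd1 (cd1 f) z + cd2 (cd2 f) z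

open Complex Filter Topology
open scoped InnerProductSpace

section LineDeriv

variable {E F 𝔸 : Type*} [NormedAddCommGroup E] [NormedSpace ℝ E] [NormedAddCommGroup F]
  [NormedSpace ℝ F] [NormedRing 𝔸] [NormedAlgebra ℝ 𝔸]

theorem HasLineDerivAt.add {f g : E → F} {f' g' : F} {x v : E} (hf : HasLineDerivAt ℝ f f' x v)
    (hg : HasLineDerivAt ℝ g g' x v) :
    HasLineDerivAt ℝ (fun y => f y + g y) (f' + g') x v :=
  HasDerivAt.add hf hg

theorem HasLineDerivAt.const_mul {f : E → 𝔸} {f' : 𝔸} {x v : E} (c : 𝔸)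
    (hf : HasLineDerivAt ℝ f f' x v) :
    HasLineDerivAt ℝ (fun y => c * f y) (c * f') x v :=
  HasDerivAt.const_mul c hf

theorem HasLineDerivAt.mul {f g : E → 𝔸} {f' g' : 𝔸} {x v : E} (hf : HasLineDerivAt ℝ f f' x v)
    (hg : HasLineDerivAt ℝ g g' x v) :
    HasLineDerivAt ℝ (fun y => f y * g y) (f' * g x + f x * g') x v := by
  have := HasDerivAt.mul hf hg
  simp only [zero_smul, add_zero] at this
  exact this

theorem HasLineDerivAt.comp_hasDerivAt {g : ℝ → F} {g' : F} {f : E → ℝ} {f' : ℝ} {x v : E}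
    (hg : HasDerivAt g g' (f x)) (hf : HasLineDerivAt ℝ f f' x v) :
    HasLineDerivAt ℝ (fun y => g (f y)) (f' • g') x v := by
  unfold HasLineDerivAt at *
  exact HasDerivAt.scomp (x := (0 : ℝ)) (by simpa using hg) hf

theorem HasLineDerivAt.lineDeriv_lineDeriv {f f' : E → F} {f'' : F} {x v : E}
    (hf : ∀ᶠ y in 𝓝 x, HasLineDerivAt ℝ f (f' y) y v) (hf' : HasLineDerivAt ℝ f' f'' x v) :
    lineDeriv ℝ (fun y => lineDeriv ℝ f y v) x v = f'' :=
  (hf'.congr_of_eventuallyEq (hf.mono fun _ hy => hy.lineDeriv)).lineDeriv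

end LineDeriv

theorem hasLineDerivAt_norm {F : Type*} [NormedAddCommGroup F] [InnerProductSpace ℝ F] {x : F}
    (v : F) (hx : x ≠ 0) : HasLineDerivAt ℝ (‖·‖) (⟪x, v⟫_ℝ / ‖x‖) x v := by
  have hsq : HasDerivAt (fun t : ℝ => ‖x + t • v‖ ^ 2) (2 * ⟪x, v⟫_ℝ) 0 := by
    simpa using (((hasDerivAt_id (0 : ℝ)).smul_const v).const_add x).norm_sq
  have := hsq.sqrt (by simpa using hx)
  simp only [Real.sqrt_sq (norm_nonneg _), zero_smul, add_zero] at this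
  rwa [mul_div_mul_left _ _ two_ne_zero] at this

theorem HasDerivAt.hasLineDerivAt_real {h : ℂ → ℂ} {h' w : ℂ} (v : ℂ) (hh : HasDerivAt h h' w) :
    HasLineDerivAt ℝ h (v * h') w v := by
  have hline : HasDerivAt (fun t : ℝ => w + t • v) v 0 := by
    simpa using ((hasDerivAt_id (0 : ℝ)).smul_const v).const_add w
  rw [mul_comm]
  exact (by simpa using hh : HasDerivAt h h' (w + (0 : ℝ) • v)).comp (0 : ℝ) hline

theorem hasLineDerivAt_ofReal_inner (w v : ℂ) :
    HasLineDerivAt ℝ (fun y : ℂ => (⟪y, v⟫_ℝ : ℂ)) (⟪v, v⟫_ℝ : ℂ) w v := by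
  have hlin : HasDerivAt (fun t : ℝ => ⟪w, v⟫_ℝ + t * ⟪v, v⟫_ℝ) ⟪v, v⟫_ℝ 0 := by
    simpa using ((hasDerivAt_id (0 : ℝ)).mul_const ⟪v, v⟫_ℝ).const_add ⟪w, v⟫_ℝ
  have e : (fun t : ℝ => ((⟪w + t • v, v⟫_ℝ : ℝ) : ℂ))
      = fun t => ((⟪w, v⟫_ℝ + t * ⟪v, v⟫_ℝ : ℝ) : ℂ) := by
    funext t
    rw [inner_add_left, real_inner_smul_left]
  unfold HasLineDerivAt
  rw [e]
  exact hlin.ofReal_comp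

theorem Complex.real_inner_one_right (z : ℂ) : ⟪z, 1⟫_ℝ = z.re := by simp [Complex.inner]

theorem Complex.real_inner_I_right (z : ℂ) : ⟪z, I⟫_ℝ = z.im := by simp [Complex.inner]

theorem Complex.ofReal_re_sq_add_ofReal_im_sq (z : ℂ) :
    (z.re : ℂ) ^ 2 + (z.im : ℂ) ^ 2 = (‖z‖ : ℂ) ^ 2 := by
  have : z.re ^ 2 + z.im ^ 2 = ‖z‖ ^ 2 := by rw [Complex.sq_norm, Complex.normSq_apply]; ring
  exact_mod_cast this

theorem cd1_eq_lineDeriv (f : ℂ → ℂ) (z : ℂ) : cd1 f z = lineDeriv ℝ f z 1 := by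
  simp [cd1, lineDeriv]

theorem cd2_eq_lineDeriv (f : ℂ → ℂ) (z : ℂ) : cd2 f z = lineDeriv ℝ f z I := by
  simp [cd2, lineDeriv]

theorem clap_eq_lineDeriv (f : ℂ → ℂ) (z : ℂ) :
    clap f z = lineDeriv ℝ (fun y => lineDeriv ℝ f y 1) z 1
      + lineDeriv ℝ (fun y => lineDeriv ℝ f y I) z I := by
  simp only [clap, cd1_eq_lineDeriv, funext (cd1_eq_lineDeriv f), cd2_eq_lineDeriv,
    funext (cd2_eq_lineDeriv f)]

theorem Filter.EventuallyEq.clap_eq {f g : ℂ → ℂ} {z : ℂ} (h : f =ᶠ[𝓝 z] g) :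
    clap f z = clap g z := by
  have h' (v : ℂ) : (fun y => lineDeriv ℝ f y v) =ᶠ[𝓝 z] fun y => lineDeriv ℝ g y v :=
    h.eventuallyEq_nhds.mono fun _ hy => hy.lineDeriv_eq
  rw [clap_eq_lineDeriv, clap_eq_lineDeriv, (h' 1).lineDeriv_eq, (h' I).lineDeriv_eq]

/-- The scaling operator `Λ`. -/
noncomputable def scalingOp (Q : ℂ → ℂ) (z : ℂ) : ℂ :=
  Q z + (z.re : ℂ) * cd1 Q z + (z.im : ℂ) * cd2 Q z

theorem Filter.EventuallyEq.scalingOp_eq {f g : ℂ → ℂ} {z : ℂ} (h : f =ᶠ[𝓝 z] g) :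
    scalingOp f z = scalingOp g z := by
  simp only [scalingOp, cd1_eq_lineDeriv, cd2_eq_lineDeriv, h.eq_of_nhds, h.lineDeriv_eq]

noncomputable def spinRadial (m : ℤ) (g : ℝ → ℂ) (w : ℂ) : ℂ := w ^ m * g ‖w‖

-- Stated through `spinRadial` again, so that it also yields the second derivatives.
theorem hasLineDerivAt_spinRadial (m : ℤ) {g g' : ℝ → ℂ} {w : ℂ} (v : ℂ) (hw : w ≠ 0)
    (hg : HasDerivAt g (g' ‖w‖) ‖w‖) :
    HasLineDerivAt ℝ (spinRadial m g)
      (m * v * spinRadial (m - 1) g w + ⟪w, v⟫_ℝ * spinRadial m (fun r => g' r / r) w) w v := by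
  have hpow := (hasDerivAt_zpow m w (Or.inl hw)).hasLineDerivAt_real v
  have hrad := (hasLineDerivAt_norm v hw).comp_hasDerivAt hg
  have e : (m * v * spinRadial (m - 1) g w + ⟪w, v⟫_ℝ * spinRadial m (fun r => g' r / r) w : ℂ)
      = v * (m * w ^ (m - 1)) * g ‖w‖ + w ^ m * (⟪w, v⟫_ℝ / ‖w‖) • g' ‖w‖ := by
    simp only [spinRadial, Complex.real_smul]
    push_cast
    ring
  rw [e]
  exact hpow.mul hrad

theorem clap_spinRadial (m : ℤ) {g g' g'' : ℝ → ℂ} (hg : ∀ r, 0 < r → HasDerivAt g (g' r) r)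
    (hg' : ∀ r, 0 < r → HasDerivAt g' (g'' r) r) {z : ℂ} (hz : z ≠ 0) :
    clap (spinRadial m g) z = z ^ m * (g'' ‖z‖ + (2 * m + 1) / ‖z‖ * g' ‖z‖) := by
  have hr : 0 < ‖z‖ := norm_pos_iff.mpr hz
  have hr' : (‖z‖ : ℂ) ≠ 0 := by exact_mod_cast hr.ne'
  have first (v : ℂ) : ∀ᶠ w in 𝓝 z, HasLineDerivAt ℝ (spinRadial m g)
      (m * v * spinRadial (m - 1) g w + ⟪w, v⟫_ℝ * spinRadial m (fun r => g' r / r) w) w v :=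
    (eventually_ne_nhds hz).mono fun w hw =>
      hasLineDerivAt_spinRadial m v hw (hg _ (norm_pos_iff.mpr hw))
  have hquot : HasDerivAt (fun s : ℝ => g' s / s) ((g'' ‖z‖ * ‖z‖ - g' ‖z‖) / ‖z‖ ^ 2) ‖z‖ :=
    ((hg' _ hr).div (hasDerivAt_id (‖z‖)).ofReal_comp hr').congr_deriv (by simp)
  have second (v : ℂ) :=
    ((hasLineDerivAt_spinRadial (m - 1) v hz (hg _ hr)).const_mul (m * v)).add
      ((hasLineDerivAt_ofReal_inner z v).mul
        (hasLineDerivAt_spinRadial m v hz (g' := fun s => (g'' s * s - g' s) / s ^ 2) hquot))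
  have hpow : z ^ (m - 1) * z = z ^ m := by rw [← zpow_add_one₀ hz, sub_add_cancel]
  rw [clap_eq_lineDeriv, HasLineDerivAt.lineDeriv_lineDeriv (first 1) (second 1),
    HasLineDerivAt.lineDeriv_lineDeriv (first I) (second I)]
  simp only [spinRadial, Complex.real_inner_one_right, Complex.real_inner_I_right,
    real_inner_self_eq_norm_sq, norm_one, Complex.norm_I]
  field_simp
  push_cast
  linear_combination (m * ‖z‖ ^ 3 * (m - 1) * z ^ (m - 1 - 1) * g ‖z‖ : ℂ) * I_sq
    + (2 * m * ‖z‖ ^ 2 * g' ‖z‖ * z ^ (m - 1) : ℂ) * Complex.re_add_im z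
    + (2 * m * ‖z‖ ^ 2 * g' ‖z‖ : ℂ) * hpow
    + (z ^ m * (‖z‖ * g'' ‖z‖ - g' ‖z‖) : ℂ) * z.ofReal_re_sq_add_ofReal_im_sq

theorem scalingOp_spinRadial (m : ℤ) {g g' : ℝ → ℂ} {z : ℂ} (hz : z ≠ 0)
    (hg : HasDerivAt g (g' ‖z‖) ‖z‖) :
    scalingOp (spinRadial m g) z = z ^ m * ((m + 1) * g ‖z‖ + ‖z‖ * g' ‖z‖) := by
  have hr' : (‖z‖ : ℂ) ≠ 0 := by exact_mod_cast norm_ne_zero_iff.mpr hz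
  have hpow : z ^ (m - 1) * z = z ^ m := by rw [← zpow_add_one₀ hz, sub_add_cancel]
  rw [scalingOp, cd1_eq_lineDeriv, cd2_eq_lineDeriv, (hasLineDerivAt_spinRadial m 1 hz hg).lineDeriv,
    (hasLineDerivAt_spinRadial m I hz hg).lineDeriv]
  simp only [spinRadial, Complex.real_inner_one_right, Complex.real_inner_I_right]
  field_simp
  linear_combination (m * ‖z‖ * g ‖z‖ * z ^ (m - 1) : ℂ) * Complex.re_add_im z
    + (m * ‖z‖ * g ‖z‖ : ℂ) * hpow + (z ^ m * g' ‖z‖ : ℂ) * z.ofReal_re_sq_add_ofReal_im_sq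

/-- The spin-`m` ansatz `e^{imθ} f(r)`, with `e^{imθ}` written as `(z / |z|)^m`. -/
noncomputable def spinAnsatz (m : ℤ) (f : ℝ → ℂ) (w : ℂ) : ℂ := (w / ‖w‖) ^ m * f ‖w‖

theorem spinAnsatz_eq_spinRadial (m : ℤ) (f : ℝ → ℂ) :
    spinAnsatz m f = spinRadial m (fun r => (r : ℂ) ^ (-m) * f r) := by
  funext w
  rw [spinAnsatz, spinRadial, div_zpow, zpow_neg, div_eq_mul_inv, mul_assoc]

theorem spinAnsatz_ofReal_mul_exp (m : ℤ) (f : ℝ → ℂ) {r : ℝ} (hr : 0 < r) (θ : ℝ) :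
    spinAnsatz m f (r * exp (θ * I)) = exp (m * θ * I) * f r := by
  have hnorm : ‖(r : ℂ) * exp (θ * I)‖ = r := by
    rw [norm_mul, Complex.norm_exp_ofReal_mul_I, Complex.norm_of_nonneg hr.le, mul_one]
  have hr' : (r : ℂ) ≠ 0 := by exact_mod_cast hr.ne'
  rw [spinAnsatz, hnorm, mul_div_cancel_left₀ _ hr', ← Complex.exp_int_mul]
  ring_nf

theorem eventuallyEq_spinAnsatz_of_polar {m : ℤ} {f : ℝ → ℂ} {Q : ℂ → ℂ}
    (hQ : ∀ r : ℝ, 0 < r → ∀ θ : ℝ, Q (r * exp (θ * I)) = exp (m * θ * I) * f r) {z : ℂ}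
    (hz : z ≠ 0) : Q =ᶠ[𝓝 z] spinAnsatz m f :=
  (eventually_ne_nhds hz).mono fun w hw => by
    rw [← Complex.norm_mul_exp_arg_mul_I w, hQ _ (norm_pos_iff.mpr hw),
      spinAnsatz_ofReal_mul_exp m f (norm_pos_iff.mpr hw)]

theorem norm_spinAnsatz (m : ℤ) (f : ℝ → ℂ) {z : ℂ} (hz : z ≠ 0) :
    ‖spinAnsatz m f z‖ = ‖f ‖z‖‖ := by
  rw [spinAnsatz, norm_mul, norm_zpow, norm_div, Complex.norm_real,
    Real.norm_of_nonneg (norm_nonneg _), div_self (norm_ne_zero_iff.mpr hz), one_zpow, one_mul]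

theorem hasDerivAt_ofReal_zpow_mul (k : ℤ) {f : ℝ → ℂ} {f' : ℂ} {r : ℝ} (hr : r ≠ 0)
    (hf : HasDerivAt f f' r) :
    HasDerivAt (fun s : ℝ => (s : ℂ) ^ k * f s) ((r : ℂ) ^ k * (f' + k * (f r / r))) r := by
  have hr' : (r : ℂ) ≠ 0 := by exact_mod_cast hr
  have hpow := (hasDerivAt_zpow k (r : ℂ) (Or.inl hr')).comp_ofReal
  refine (hpow.mul hf).congr_deriv ?_
  rw [zpow_sub_one₀ hr']
  field_simp
  ring

theorem clap_spinAnsatz (m : ℤ) {f f' f'' : ℝ → ℂ} (hf : ∀ r, 0 < r → HasDerivAt f (f' r) r)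
    (hf' : ∀ r, 0 < r → HasDerivAt f' (f'' r) r) {z : ℂ} (hz : z ≠ 0) :
    clap (spinAnsatz m f) z
      = (z / ‖z‖) ^ m * (f'' ‖z‖ + f' ‖z‖ / ‖z‖ - m ^ 2 / ‖z‖ ^ 2 * f ‖z‖) := by
  set F : ℝ → ℂ := fun r => f' r + ((-m : ℤ) : ℂ) * (f r / r)
  have hF (r : ℝ) (hr : 0 < r) :
      HasDerivAt F (f'' r + ((-m : ℤ) : ℂ) * ((f' r * r - f r) / r ^ 2)) r := by
    have hr' : (r : ℂ) ≠ 0 := by exact_mod_cast hr.ne'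
    refine ((hf' r hr).add (((hf r hr).div (hasDerivAt_id r).ofReal_comp hr').const_mul
      ((-m : ℤ) : ℂ))).congr_deriv ?_
    simp
  rw [spinAnsatz_eq_spinRadial, clap_spinRadial m
    (fun r hr => hasDerivAt_ofReal_zpow_mul (-m) hr.ne' (hf r hr))
    (fun r hr => hasDerivAt_ofReal_zpow_mul (-m) hr.ne' (hF r hr)) hz]
  have hr' : (‖z‖ : ℂ) ≠ 0 := by exact_mod_cast norm_ne_zero_iff.mpr hz
  simp only [div_zpow, zpow_neg]
  field_simp
  push_cast
  ring

theorem scalingOp_spinAnsatz (m : ℤ) {f f' : ℝ → ℂ} {z : ℂ} (hz : z ≠ 0)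
    (hf : HasDerivAt f (f' ‖z‖) ‖z‖) :
    scalingOp (spinAnsatz m f) z = (z / ‖z‖) ^ m * (f ‖z‖ + ‖z‖ * f' ‖z‖) := by
  rw [spinAnsatz_eq_spinRadial, scalingOp_spinRadial m hz
    (g' := fun r => (r : ℂ) ^ (-m) * (f' r + ((-m : ℤ) : ℂ) * (f r / r)))
    (hasDerivAt_ofReal_zpow_mul (-m) (norm_ne_zero_iff.mpr hz) hf)]
  have hr' : (‖z‖ : ℂ) ≠ 0 := by exact_mod_cast norm_ne_zero_iff.mpr hz
  simp only [div_zpow, zpow_neg]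
  field_simp
  push_cast
  ring

noncomputable def quadPhase (b r : ℝ) : ℂ := exp (-I * b * r ^ 2 / 4)

theorem norm_quadPhase (b r : ℝ) : ‖quadPhase b r‖ = 1 := by
  rw [quadPhase, show -I * b * r ^ 2 / 4 = ((-(b * r ^ 2 / 4) : ℝ) : ℂ) * I by push_cast; ring,
    Complex.norm_exp_ofReal_mul_I]

theorem HasDerivAt.mul_quadPhase (b : ℝ) {p : ℝ → ℂ} {p' : ℂ} {r : ℝ} (hp : HasDerivAt p p' r) :
    HasDerivAt (fun s => p s * quadPhase b s) ((p' - I * b / 2 * r * p r) * quadPhase b r) r := by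
  have hexp : HasDerivAt (quadPhase b) (-I * b * r / 2 * quadPhase b r) r := by
    have hsq := ((hasDerivAt_pow 2 (r : ℂ)).comp_ofReal).const_mul (-I * b / 4)
    refine (hsq.cexp.congr_deriv ?_).congr_of_eventuallyEq (Eventually.of_forall fun s => ?_)
    · rw [quadPhase]; push_cast; ring_nf
    · rw [quadPhase]; ring_nf
  refine (hp.mul hexp).congr_deriv ?_
  ring

/-- The left-hand side `ΔQ - Q + ibΛQ + Q|Q|²` of the self-similar equation. -/
noncomputable def selfSimilarResidual (b : ℝ) (Q : ℂ → ℂ) (z : ℂ) : ℂ :=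
  clap Q z - Q z + I * b * scalingOp Q z + Q z * ((‖Q z‖ : ℂ)) ^ 2

noncomputable def profileResidual (m : ℤ) (b : ℝ) (P P' P'' : ℝ → ℝ) (r : ℝ) : ℝ :=
  P'' r + (1 / r) * P' r - (1 + (m : ℝ) ^ 2 / r ^ 2 - b ^ 2 * r ^ 2 / 4) * P r + (P r) ^ 3

theorem Filter.EventuallyEq.selfSimilarResidual_eq (b : ℝ) {f g : ℂ → ℂ} {z : ℂ}
    (h : f =ᶠ[𝓝 z] g) : selfSimilarResidual b f z = selfSimilarResidual b g z := by
  rw [selfSimilarResidual, selfSimilarResidual, h.clap_eq, h.scalingOp_eq, h.eq_of_nhds]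

theorem selfSimilarResidual_spinAnsatz (m : ℤ) (b : ℝ) {P P' P'' : ℝ → ℝ}
    (hP' : ∀ r, 0 < r → HasDerivAt P (P' r) r) (hP'' : ∀ r, 0 < r → HasDerivAt P' (P'' r) r)
    {z : ℂ} (hz : z ≠ 0) :
    selfSimilarResidual b (spinAnsatz m fun r => P r * quadPhase b r) z
      = (z / ‖z‖) ^ m * quadPhase b ‖z‖ * profileResidual m b P P' P'' ‖z‖ := by
  have hr : 0 < ‖z‖ := norm_pos_iff.mpr hz
  have hr' : (‖z‖ : ℂ) ≠ 0 := by exact_mod_cast hr.ne'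
  have hf (r : ℝ) (hr : 0 < r) := (hP' r hr).ofReal_comp.mul_quadPhase b
  have hf' (r : ℝ) (hr : 0 < r) :
      HasDerivAt (fun s => ((P' s : ℂ) - I * b / 2 * s * P s) * quadPhase b s)
        ((P'' r - I * b / 2 * (P r + r * P' r) - I * b / 2 * r * (P' r - I * b / 2 * r * P r))
          * quadPhase b r) r := by
    refine HasDerivAt.mul_quadPhase b ?_
    refine ((hP'' r hr).ofReal_comp.sub ((((hasDerivAt_id r).ofReal_comp.const_mul
      (I * b / 2)).mul (hP' r hr).ofReal_comp))).congr_deriv ?_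
    simp
    ring
  have hnorm : (‖spinAnsatz m (fun r => P r * quadPhase b r) z‖ : ℂ) ^ 2 = (P ‖z‖ : ℂ) ^ 2 := by
    rw [norm_spinAnsatz m _ hz, norm_mul, norm_quadPhase, Complex.norm_real, Real.norm_eq_abs,
      mul_one, ← Complex.ofReal_pow, sq_abs, Complex.ofReal_pow]
  rw [selfSimilarResidual, clap_spinAnsatz m hf hf' hz, scalingOp_spinAnsatz m hz
    (f' := fun r => ((P' r : ℂ) - I * b / 2 * r * P r) * quadPhase b r) (hf _ hr), hnorm,
    spinAnsatz, profileResidual]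
  push_cast
  field_simp
  linear_combination (-4 * quadPhase b ‖z‖ * ‖z‖ ^ 4 * b ^ 2 * P ‖z‖ : ℂ) * I_sq

theorem stmt_12_general (m : ℤ) (b : ℝ) (P P' P'' : ℝ → ℝ)
    (hP' : ∀ r : ℝ, 0 < r → HasDerivAt P (P' r) r)
    (hP'' : ∀ r : ℝ, 0 < r → HasDerivAt P' (P'' r) r)
    (Qb : ℂ → ℂ)
    (hQb : ∀ r : ℝ, 0 < r → ∀ θ : ℝ,
      Qb ((r : ℂ) * Complex.exp ((θ : ℂ) * Complex.I))
        = Complex.exp ((m : ℂ) * (θ : ℂ) * Complex.I) * ((P r : ℝ) : ℂ) *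
            Complex.exp (-Complex.I * (b : ℂ) * (r : ℂ) ^ 2 / 4)) :
    (∀ z : ℂ, z ≠ 0 →
        clap Qb z - Qb z
          + Complex.I * (b : ℂ) *
              (Qb z + (z.re : ℂ) * cd1 Qb z + (z.im : ℂ) * cd2 Qb z)
          + Qb z * ((‖Qb z‖ : ℂ)) ^ 2 = 0)
    ↔ (∀ r : ℝ, 0 < r →
        P'' r + (1 / r) * P' r
          - (1 + (m : ℝ) ^ 2 / r ^ 2 - b ^ 2 * r ^ 2 / 4) * P r + (P r) ^ 3 = 0) := by
  have key (z : ℂ) (hz : z ≠ 0) :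
      selfSimilarResidual b Qb z = 0 ↔ profileResidual m b P P' P'' ‖z‖ = 0 := by
    have hQ : Qb =ᶠ[𝓝 z] spinAnsatz m fun r => P r * quadPhase b r :=
      eventuallyEq_spinAnsatz_of_polar (fun r hr θ => by rw [hQb r hr θ, mul_assoc, quadPhase]) hz
    have hunit : (z / ‖z‖) ^ m * quadPhase b ‖z‖ ≠ 0 :=
      mul_ne_zero (zpow_ne_zero _ (div_ne_zero hz (by exact_mod_cast norm_ne_zero_iff.mpr hz)))
        (Complex.exp_ne_zero _)
    rw [hQ.selfSimilarResidual_eq, selfSimilarResidual_spinAnsatz m b hP' hP'' hz,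
      mul_eq_zero_iff_left hunit, ofReal_eq_zero]
  change (∀ z : ℂ, z ≠ 0 → selfSimilarResidual b Qb z = 0)
    ↔ ∀ r : ℝ, 0 < r → profileResidual m b P P' P'' r = 0
  refine ⟨fun h r hr => ?_, fun h z hz => (key z hz).2 (h _ (norm_pos_iff.mpr hz))⟩
  have hr' : (r : ℂ) ≠ 0 := ofReal_ne_zero.mpr hr.ne'
  simpa [abs_of_pos hr] using (key r hr').1 (h r hr')

/-- Quadratic phase removal for self-similar profiles: for m ∈ ℤ, b ∈ ℝ and
P twice continuously differentiable on (0,∞), the function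
Q_b(r e^{iθ}) = e^{imθ} P(r) e^{−ibr²/4} satisfies ΔQ_b − Q_b + ibΛQ_b + Q_b|Q_b|² = 0 on
ℝ² ∖ {0} iff P satisfies P'' + (1/r)P' − (1 + m²/r² − b²r²/4)P + P³ = 0 on (0,∞). -/
theorem stmt_12 (m : ℤ) (b : ℝ) (P P' P'' : ℝ → ℝ)
    (hP' : ∀ r : ℝ, 0 < r → HasDerivAt P (P' r) r)
    (hP'' : ∀ r : ℝ, 0 < r → HasDerivAt P' (P'' r) r)
    (hPcont : ContinuousOn P'' (Set.Ioi (0 : ℝ)))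
    (Qb : ℂ → ℂ)
    (hQb : ∀ r : ℝ, 0 < r → ∀ θ : ℝ,
      Qb ((r : ℂ) * Complex.exp ((θ : ℂ) * Complex.I))
        = Complex.exp ((m : ℂ) * (θ : ℂ) * Complex.I) * ((P r : ℝ) : ℂ) *
            Complex.exp (-Complex.I * (b : ℂ) * (r : ℂ) ^ 2 / 4)) :
    (∀ z : ℂ, z ≠ 0 →
        clap Qb z - Qb z
          + Complex.I * (b : ℂ) *
              (Qb z + (z.re : ℂ) * cd1 Qb z + (z.im : ℂ) * cd2 Qb z)
          + Qb z * ((‖Qb z‖ : ℂ)) ^ 2 = 0)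
    ↔ (∀ r : ℝ, 0 < r →
        P'' r + (1 / r) * P' r
          - (1 + (m : ℝ) ^ 2 / r ^ 2 - b ^ 2 * r ^ 2 / 4) * P r + (P r) ^ 3 = 0) :=
  stmt_12_general m b P P' P'' hP' hP'' Qb hQb
end

section
/- Generalized nullspace identity for L₋: Let m ∈ ℤ and let R : (0,∞) → ℝ be twice continuously differentiable and satisfy the radial vortex equation R''(r) + (1/r) R'(r) − (1 + m²/r²) R(r) + R(r)³ = 0 for all r > 0. Define the radial operator L₋ f = −( f'' + (1/r) f' ) + (1 + m²/r²) f − R² f and the scaling operator Λ f (r) = f(r) + r f'(r). Then L₋( r² R ) = −4 Λ R pointwise on (0,∞), where r²R denotes the function r ↦ r² R(r). -/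
/-!
Since `(r²R)' = 2rR + r²R'` and `(r²R)'' = 2R + 4rR' + r²R''`, the radial Laplacian of `r²R` is
`4R + 5rR' + r²R''`; eliminating `r²R''` with the vortex equation leaves `-4R - 4rR' = -4ΛR`.
-/

open Filter Topology

theorem hasDerivAt_sq_mul {R R' : ℝ → ℝ} {r : ℝ} (h : HasDerivAt R (R' r) r) :
    HasDerivAt (fun s => s ^ 2 * R s) (2 * r * R r + r ^ 2 * R' r) r := by
  have h2 : HasDerivAt (fun s => s ^ 2 * R s) _ r := (hasDerivAt_pow 2 r).mul h
  convert h2 using 1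
  ring

theorem deriv_deriv_sq_mul {R R' R'' : ℝ → ℝ} {U : Set ℝ} (hU : IsOpen U)
    (hR' : ∀ s ∈ U, HasDerivAt R (R' s) s) {r : ℝ} (hr : r ∈ U)
    (hR'' : HasDerivAt R' (R'' r) r) :
    deriv (deriv fun s => s ^ 2 * R s) r = 2 * R r + 4 * r * R' r + r ^ 2 * R'' r := by
  have hderiv : deriv (fun s => s ^ 2 * R s) =ᶠ[𝓝 r] fun s => 2 * s * R s + s ^ 2 * R' s :=
    eventually_of_mem (hU.mem_nhds hr) fun s hs => (hasDerivAt_sq_mul (hR' s hs)).deriv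
  rw [hderiv.deriv_eq]
  have hlin : HasDerivAt (fun s => 2 * s * R s) (2 * 1 * R r + 2 * r * R' r) r :=
    ((hasDerivAt_id' r).const_mul 2).mul (hR' r hr)
  have hsum : HasDerivAt (fun s => 2 * s * R s + s ^ 2 * R' s) _ r :=
    hlin.add (hasDerivAt_sq_mul hR'')
  rw [hsum.deriv]
  ring

theorem stmt_14_general (m : ℤ) (R R' R'' : ℝ → ℝ)
    (hR' : ∀ r : ℝ, 0 < r → HasDerivAt R (R' r) r)
    (hR'' : ∀ r : ℝ, 0 < r → HasDerivAt R' (R'' r) r)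
    (hode : ∀ r : ℝ, 0 < r →
      R'' r + (1 / r) * R' r - (1 + (m : ℝ) ^ 2 / r ^ 2) * R r + (R r) ^ 3 = 0) :
    ∀ r : ℝ, 0 < r →
      -(deriv (deriv (fun s => s ^ 2 * R s)) r
          + (1 / r) * deriv (fun s => s ^ 2 * R s) r)
        + (1 + (m : ℝ) ^ 2 / r ^ 2) * (r ^ 2 * R r)
        - (R r) ^ 2 * (r ^ 2 * R r)
      = -4 * (R r + r * R' r) := by
  intro r hr
  rw [deriv_deriv_sq_mul isOpen_Ioi hR' hr (hR'' r hr), (hasDerivAt_sq_mul (hR' r hr)).deriv]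
  linear_combination (-r ^ 2) * hode r hr - 2 * R r * mul_inv_cancel₀ hr.ne'

/-- Generalized nullspace identity for L₋: if R is twice continuously
differentiable on (0,∞) and satisfies the radial vortex equation
R'' + (1/r)R' − (1 + m²/r²)R + R³ = 0, then L₋(r²R) = −4ΛR on (0,∞), where
L₋ f = −(f'' + (1/r)f') + (1 + m²/r²) f − R² f and Λf(r) = f(r) + r f'(r). -/
theorem stmt_14 (m : ℤ) (R R' R'' : ℝ → ℝ)
    (hR' : ∀ r : ℝ, 0 < r → HasDerivAt R (R' r) r)
    (hR'' : ∀ r : ℝ, 0 < r → HasDerivAt R' (R'' r) r)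
    (hRcont : ContinuousOn R'' (Set.Ioi (0 : ℝ)))
    (hode : ∀ r : ℝ, 0 < r →
      R'' r + (1 / r) * R' r - (1 + (m : ℝ) ^ 2 / r ^ 2) * R r + (R r) ^ 3 = 0) :
    ∀ r : ℝ, 0 < r →
      -(deriv (deriv (fun s => s ^ 2 * R s)) r
          + (1 / r) * deriv (fun s => s ^ 2 * R s) r)
        + (1 + (m : ℝ) ^ 2 / r ^ 2) * (r ^ 2 * R r)
        - (R r) ^ 2 * (r ^ 2 * R r)
      = -4 * (R r + r * R' r) :=
  stmt_14_general m R R' R'' hR' hR'' hode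
end

section
/- Log-log rate from the Lyapounov dynamic: Let 0 < T < 1/100 and let λ : [0,T) → (0, e^{−e}) be differentiable with λ(t) → 0 as t → T. Suppose there is a constant C > 1 such that for all t ∈ [0,T), 1/C ≤ −(d/dt)( λ(t)² · log log(1/λ(t)) ) ≤ C. Then there exist a constant C' > 1 and t* ∈ [0,T) such that for all t ∈ [t*, T): (1/C') · ( (T−t) / log log(1/(T−t)) )^{1/2} ≤ λ(t) ≤ C' · ( (T−t) / log log(1/(T−t)) )^{1/2}. -/
/-!
Write `F = λ² log log (1 / λ)`. Its derivative within `[0, T)` is nonzero, so `F` is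
differentiable there, and `-F' ∈ [1/C, C]` together with `0 ≤ F ≤ λ → 0` gives, by the mean
value theorem, `F(t) ∈ [(T - t)/C, C (T - t)]`. For `u = T - t` small, taking logarithms twice in
`λ² log log (1 / λ) ≍ u` shows that `log log (1 / λ)` and `log log (1 / u)` agree up to a factor
`2`, whence `λ² ≍ u / log log (1 / u)` with constant `2 C`.
-/

open Real Set Filter Topology

theorem Convex.mul_sub_le_image_sub_of_le_derivWithin {D : Set ℝ} (hD : Convex ℝ D) {f : ℝ → ℝ}
    (hf : DifferentiableOn ℝ f D) {m : ℝ} (hm : ∀ x ∈ D, m ≤ derivWithin f D x) :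
    ∀ x ∈ D, ∀ y ∈ D, x ≤ y → m * (y - x) ≤ f y - f x :=
  hD.mul_sub_le_image_sub_of_le_deriv hf.continuousOn (hf.mono interior_subset)
    fun x hx => by
      rw [← derivWithin_of_mem_nhds (mem_interior_iff_mem_nhds.mp hx)]
      exact hm x (interior_subset hx)

theorem Convex.image_sub_le_mul_sub_of_derivWithin_le {D : Set ℝ} (hD : Convex ℝ D) {f : ℝ → ℝ}
    (hf : DifferentiableOn ℝ f D) {M : ℝ} (hM : ∀ x ∈ D, derivWithin f D x ≤ M) :
    ∀ x ∈ D, ∀ y ∈ D, x ≤ y → f y - f x ≤ M * (y - x) :=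
  hD.image_sub_le_mul_sub_of_deriv_le hf.continuousOn (hf.mono interior_subset)
    fun x hx => by
      rw [← derivWithin_of_mem_nhds (mem_interior_iff_mem_nhds.mp hx)]
      exact hM x (interior_subset hx)

theorem mem_Icc_mul_sub_of_neg_derivWithin_mem_Icc {f : ℝ → ℝ} {a b m M : ℝ}
    (hf : DifferentiableOn ℝ f (Ico a b))
    (hderiv : ∀ t ∈ Ico a b, -derivWithin f (Ico a b) t ∈ Icc m M)
    (hlim : Tendsto f (𝓝[Ico a b] b) (𝓝 0)) {t : ℝ} (ht : t ∈ Ico a b) :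
    f t ∈ Icc (m * (b - t)) (M * (b - t)) := by
  have hab : a < b := ht.1.trans_lt ht.2
  rw [nhdsWithin_Ico_eq_nhdsLT hab] at hlim
  have hnear : ∀ᶠ s in 𝓝[<] b, s ∈ Ico t b := Ico_mem_nhdsLT ht.2
  have hsub : Tendsto (fun s => f t - f s) (𝓝[<] b) (𝓝 (f t)) := by
    simpa using tendsto_const_nhds.sub hlim
  have hlin : ∀ k : ℝ, Tendsto (fun s => k * (s - t)) (𝓝[<] b) (𝓝 (k * (b - t))) := fun k =>
    ((continuous_const.mul (continuous_id.sub continuous_const)).tendsto b).mono_left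
      nhdsWithin_le_nhds
  have hs_mem : ∀ s ∈ Ico t b, s ∈ Ico a b := fun s hs => ⟨ht.1.trans hs.1, hs.2⟩
  constructor
  · refine le_of_tendsto_of_tendsto (hlin m) hsub (hnear.mono fun s hs => ?_)
    have := (convex_Ico a b).image_sub_le_mul_sub_of_derivWithin_le hf
      (fun x hx => le_neg.mp (hderiv x hx).1) t ht s (hs_mem s hs) hs.1
    linarith
  · refine le_of_tendsto_of_tendsto hsub (hlin M) (hnear.mono fun s hs => ?_)
    have := (convex_Ico a b).mul_sub_le_image_sub_of_le_derivWithin hf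
      (fun x hx => neg_le.mp (hderiv x hx).2) t ht s (hs_mem s hs) hs.1
    linarith

theorem exp_neg_exp_one_lt_one : exp (-exp 1) < 1 :=
  exp_lt_one_iff.mpr (neg_neg_of_pos (exp_pos 1))

theorem one_lt_log_log_inv {x : ℝ} (hx : 0 < x) (hxe : x < exp (-exp 1)) :
    1 < log (log (1 / x)) := by
  have h : exp 1 < log (1 / x) := by
    rw [one_div, log_inv, lt_neg]
    exact (log_lt_iff_lt_exp hx).mpr hxe
  simpa using log_lt_log (exp_pos 1) h

theorem log_log_inv_le_inv {x : ℝ} (hx : 0 < x) (hx1 : x < 1) : log (log (1 / x)) ≤ 1 / x := by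
  have hlog : 0 < log (1 / x) := log_pos (by rw [lt_one_div one_pos hx]; simpa)
  linarith [log_le_sub_one_of_pos hlog, log_le_sub_one_of_pos (one_div_pos.mpr hx)]

theorem sq_mul_log_log_inv_le {x : ℝ} (hx : 0 < x) (hx1 : x < 1) :
    x ^ 2 * log (log (1 / x)) ≤ x :=
  calc x ^ 2 * log (log (1 / x)) ≤ x ^ 2 * (1 / x) :=
        mul_le_mul_of_nonneg_left (log_log_inv_le_inv hx hx1) (sq_nonneg x)
    _ = x := by field_simp

theorem half_log_log_inv_le_log_log_inv_of_sq_le {x u C : ℝ} (hx : 0 < x) (hu : 0 < u)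
    (hC : 1 ≤ C) (hxu : x ^ 2 ≤ C * u) (hsmall : (2 + log C) ^ 2 ≤ log (1 / u)) :
    log (log (1 / u)) / 2 ≤ log (log (1 / x)) := by
  set ℓ := log (1 / u)
  have hc : 0 ≤ log C := log_nonneg hC
  have hℓ : 0 < ℓ := by nlinarith
  have hsqrt : 2 + log C ≤ √ℓ := by
    rw [← sqrt_sq (by linarith : 0 ≤ 2 + log C)]
    exact sqrt_le_sqrt hsmall
  have hlogx : 2 * log x ≤ log C - ℓ := by
    have := log_le_log (by positivity) hxu
    rwa [log_pow, log_mul (by positivity) hu.ne', show log u = -ℓ by simp [ℓ]] at this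
  -- the threshold on `ℓ` is exactly what makes `(ℓ - log C) / 2 ≥ √ℓ`
  have hsqrt_le : √ℓ ≤ log (1 / x) := by
    have := sq_sqrt hℓ.le
    rw [one_div, log_inv]
    nlinarith
  calc log ℓ / 2 = log √ℓ := (log_sqrt hℓ.le).symm
    _ ≤ log (log (1 / x)) := log_le_log (sqrt_pos.mpr hℓ) hsqrt_le

theorem log_log_inv_le_two_mul_log_log_inv_of_le_mul {x u C : ℝ} (hx : 0 < x) (hx1 : x < 1)
    (hu : 0 < u) (hC : 1 ≤ C) (hux : u ≤ C * x) (hsmall : (2 + log C) ^ 2 ≤ log (1 / u)) :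
    log (log (1 / x)) ≤ 2 * log (log (1 / u)) := by
  set ℓ := log (1 / u)
  have hc : 0 ≤ log C := log_nonneg hC
  have hℓ : 4 ≤ ℓ := by nlinarith
  have hlogx : log (1 / x) ≤ 2 * ℓ := by
    have := log_le_log hu hux
    rw [log_mul (by positivity) hx.ne', show log u = -ℓ by simp [ℓ]] at this
    rw [one_div, log_inv]
    nlinarith
  have hlogx_pos : 0 < log (1 / x) := log_pos (by rw [lt_one_div one_pos hx]; simpa)
  calc log (log (1 / x)) ≤ log (2 * ℓ) := log_le_log hlogx_pos hlogx
    _ = log 2 + log ℓ := log_mul two_ne_zero (by positivity)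
    _ ≤ 2 * log ℓ := by linarith [log_le_log two_pos (by linarith : (2 : ℝ) ≤ ℓ)]

theorem sqrt_bounds_of_sq_mul_bounds {x u y K : ℝ} (hx : 0 < x) (hy : 0 < y) (hK : 0 < K)
    (hupper : x ^ 2 * y ≤ K * u) (hlower : u ≤ K * (x ^ 2 * y)) :
    1 / √K * √(u / y) ≤ x ∧ x ≤ √K * √(u / y) := by
  constructor
  · rw [one_div_mul_eq_div, ← sqrt_div' _ hK.le, sqrt_le_left hx.le, div_div,
      div_le_iff₀ (by positivity)]
    linarith
  · rw [← sqrt_mul hK.le, le_sqrt' hx, ← mul_div_assoc, le_div_iff₀ hy]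
    exact hupper

theorem log_log_rate_of_sq_mul_log_log_bounds {x u C : ℝ} (hx : 0 < x) (hxe : x < exp (-exp 1))
    (hu : 0 < u) (hC : 1 ≤ C) (hsmall : (2 + log C) ^ 2 ≤ log (1 / u))
    (hlower : 1 / C * u ≤ x ^ 2 * log (log (1 / x)))
    (hupper : x ^ 2 * log (log (1 / x)) ≤ C * u) :
    1 / √(2 * C) * √(u / log (log (1 / u))) ≤ x ∧ x ≤ √(2 * C) * √(u / log (log (1 / u))) := by
  have hx1 : x < 1 := hxe.trans exp_neg_exp_one_lt_one
  have hC0 : 0 < C := by linarith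
  have hL := one_lt_log_log_inv hx hxe
  have hLu : 0 < log (log (1 / u)) := by
    have : 0 ≤ log C := log_nonneg hC
    exact log_pos (by nlinarith)
  have hxu : x ^ 2 ≤ C * u := by nlinarith
  have hux : u ≤ C * x := by
    have := hlower.trans (sq_mul_log_log_inv_le hx hx1)
    rwa [one_div_mul_eq_div, div_le_iff₀ hC0, mul_comm] at this
  have hLLu := half_log_log_inv_le_log_log_inv_of_sq_le hx hu hC hxu hsmall
  have hLuL := log_log_inv_le_two_mul_log_log_inv_of_le_mul hx hx1 hu hC hux hsmall
  apply sqrt_bounds_of_sq_mul_bounds hx hLu (by positivity)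
  · nlinarith
  · rw [one_div_mul_eq_div, div_le_iff₀ hC0] at hlower
    nlinarith

theorem stmt_18_general (T : ℝ) (hT : 0 < T)
    (lam : ℝ → ℝ)
    (hrange : ∀ t ∈ Set.Ico (0 : ℝ) T, 0 < lam t ∧ lam t < Real.exp (-Real.exp 1))
    (hlim : Filter.Tendsto lam (nhdsWithin T (Set.Ico (0 : ℝ) T)) (nhds 0))
    (C : ℝ) (hC : 1 < C)
    (hderiv : ∀ t ∈ Set.Ico (0 : ℝ) T,
      1 / C ≤
        -(derivWithin (fun s => lam s ^ 2 * Real.log (Real.log (1 / lam s)))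
            (Set.Ico (0 : ℝ) T) t) ∧
      -(derivWithin (fun s => lam s ^ 2 * Real.log (Real.log (1 / lam s)))
            (Set.Ico (0 : ℝ) T) t) ≤ C) :
    ∃ C' : ℝ, 1 < C' ∧ ∃ tstar ∈ Set.Ico (0 : ℝ) T, ∀ t ∈ Set.Ico tstar T,
      (1 / C') * Real.sqrt ((T - t) / Real.log (Real.log (1 / (T - t)))) ≤ lam t ∧
      lam t ≤ C' * Real.sqrt ((T - t) / Real.log (Real.log (1 / (T - t)))) := by
  set F : ℝ → ℝ := fun s => lam s ^ 2 * log (log (1 / lam s))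
  have hF_diff : DifferentiableOn ℝ F (Ico 0 T) := fun t ht =>
    differentiableWithinAt_of_derivWithin_ne_zero fun h => by
      have := (hderiv t ht).1
      rw [h, neg_zero] at this
      exact (one_div_pos.mpr (zero_lt_one.trans hC)).not_ge this
  have hF_bounds : ∀ t ∈ Ico 0 T, 0 ≤ F t ∧ F t ≤ lam t := fun t ht => by
    obtain ⟨hx, hxe⟩ := hrange t ht
    exact ⟨mul_nonneg (sq_nonneg _) (by linarith [one_lt_log_log_inv hx hxe]),
      sq_mul_log_log_inv_le hx (hxe.trans exp_neg_exp_one_lt_one)⟩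
  have hF_lim : Tendsto F (𝓝[Ico 0 T] T) (𝓝 0) :=
    squeeze_zero' (eventually_mem_nhdsWithin.mono fun t ht => (hF_bounds t ht).1)
      (eventually_mem_nhdsWithin.mono fun t ht => (hF_bounds t ht).2) hlim
  set δ := exp (-(2 + log C) ^ 2)
  have hδ : 0 < δ := exp_pos _
  refine ⟨√(2 * C), ?_, max 0 (T - δ), ⟨le_max_left _ _, max_lt hT (by linarith)⟩, fun t ht => ?_⟩
  · rw [lt_sqrt zero_le_one]
    linarith
  have htS : t ∈ Ico 0 T := ⟨(le_max_left _ _).trans ht.1, ht.2⟩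
  have hsmall : (2 + log C) ^ 2 ≤ log (1 / (T - t)) := by
    rw [one_div, log_inv, le_neg, log_le_iff_le_exp (sub_pos.mpr ht.2)]
    linarith [(le_max_right 0 (T - δ)).trans ht.1]
  have hrate := mem_Icc_mul_sub_of_neg_derivWithin_mem_Icc hF_diff hderiv hF_lim htS
  exact log_log_rate_of_sq_mul_log_log_bounds (hrange t htS).1 (hrange t htS).2
    (sub_pos.mpr ht.2) hC.le hsmall hrate.1 hrate.2

/-- Log-log rate from the Lyapounov dynamic: if 0 < T < 1/100 and
λ : [0,T) → (0, e^{−e}) is differentiable with λ(t) → 0 as t → T, and there is C > 1 with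
1/C ≤ −(d/dt)(λ² log log(1/λ)) ≤ C on [0,T), then there are C' > 1 and t* ∈ [0,T) such
that (1/C')·((T−t)/log log(1/(T−t)))^{1/2} ≤ λ(t) ≤ C'·((T−t)/log log(1/(T−t)))^{1/2}
for all t ∈ [t*,T). -/
theorem stmt_18 (T : ℝ) (hT : 0 < T) (hT' : T < 1 / 100)
    (lam : ℝ → ℝ)
    (hrange : ∀ t ∈ Set.Ico (0 : ℝ) T, 0 < lam t ∧ lam t < Real.exp (-Real.exp 1))
    (hdiff : DifferentiableOn ℝ lam (Set.Ico (0 : ℝ) T))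
    (hlim : Filter.Tendsto lam (nhdsWithin T (Set.Ico (0 : ℝ) T)) (nhds 0))
    (C : ℝ) (hC : 1 < C)
    (hderiv : ∀ t ∈ Set.Ico (0 : ℝ) T,
      1 / C ≤
        -(derivWithin (fun s => lam s ^ 2 * Real.log (Real.log (1 / lam s)))
            (Set.Ico (0 : ℝ) T) t) ∧
      -(derivWithin (fun s => lam s ^ 2 * Real.log (Real.log (1 / lam s)))
            (Set.Ico (0 : ℝ) T) t) ≤ C) :
    ∃ C' : ℝ, 1 < C' ∧ ∃ tstar ∈ Set.Ico (0 : ℝ) T, ∀ t ∈ Set.Ico tstar T,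
      (1 / C') * Real.sqrt ((T - t) / Real.log (Real.log (1 / (T - t)))) ≤ lam t ∧
      lam t ≤ C' * Real.sqrt ((T - t) / Real.log (Real.log (1 / (T - t)))) :=
  stmt_18_general T hT lam hrange hlim C hC hderiv
end
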